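/- Let A ⊇ B be a Frobenius extension with Frobenius homomorphism E: A → B, dual bases x_i, y_i, such that [A:B]_E = Σ_i x_i y_i is invertible in Z(A). If the centralizer A^B equals Z(A), then the element [A:B]_E^{−1} Σ_i x_i ⊗_B y_i is the unique separability element of A over B. -/

import Mathlib

open scoped TensorProduct

section SepPrelude

variable {A : Type*} [Ring A]

/-- Relations defining `A ⊗_B A` as a quotient of `A ⊗_ℤ A`. -/
def sepRel (B : Subring A) : Submodule ℤ (TensorProduct ℤ A A) :=
  Submodule.span ℤ
    {z | ∃ (x y : A) (b : B), z = (x * (b : A)) ⊗ₜ[ℤ] y - x ⊗ₜ[ℤ] ((b : A) * y)}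

/-- The tensor product `A ⊗_B A` of `A` with itself over the subring `B`. -/
abbrev TensorOverSub (B : Subring A) : Type _ := TensorProduct ℤ A A ⧸ sepRel B

/-- The basic tensor `x ⊗_B y`. -/
noncomputable def tmulB (B : Subring A) (x y : A) : TensorOverSub B :=
  Submodule.Quotient.mk (x ⊗ₜ[ℤ] y)

/-- Left multiplication `a • (x ⊗ y) = (a*x) ⊗ y` on `A ⊗_B A`. -/
noncomputable def lmulB (B : Subring A) (a : A) :
    TensorOverSub B →ₗ[ℤ] TensorOverSub B :=
  Submodule.mapQ _ _ (LinearMap.rTensor A (LinearMap.mulLeft ℤ a)) (by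
    refine Submodule.span_le.mpr ?_
    rintro _ ⟨x, y, b, rfl⟩
    simp only [SetLike.mem_coe, Submodule.mem_comap, map_sub, LinearMap.rTensor_tmul,
      LinearMap.mulLeft_apply]
    exact Submodule.subset_span ⟨a * x, y, b, by
      erw [map_sub, LinearMap.rTensor_tmul, LinearMap.rTensor_tmul]
      simp only [LinearMap.mulLeft_apply, mul_assoc a x (b : A)]⟩)

/-- Right multiplication `(x ⊗ y) • a = x ⊗ (y*a)` on `A ⊗_B A`. -/
noncomputable def rmulB (B : Subring A) (a : A) :
    TensorOverSub B →ₗ[ℤ] TensorOverSub B :=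
  Submodule.mapQ _ _ (LinearMap.lTensor A (LinearMap.mulRight ℤ a)) (by
    refine Submodule.span_le.mpr ?_
    rintro _ ⟨x, y, b, rfl⟩
    simp only [SetLike.mem_coe, Submodule.mem_comap, map_sub, LinearMap.lTensor_tmul,
      LinearMap.mulRight_apply]
    exact Submodule.subset_span ⟨x, y * a, b, by
      erw [map_sub, LinearMap.lTensor_tmul, LinearMap.lTensor_tmul]
      simp only [LinearMap.mulRight_apply, mul_assoc]⟩)

/-- The multiplication map `μ : A ⊗_B A → A`. -/
noncomputable def mulMapB (B : Subring A) : TensorOverSub B →ₗ[ℤ] A :=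
  Submodule.liftQ _ (LinearMap.mul' ℤ A) (by
    refine Submodule.span_le.mpr ?_
    rintro _ ⟨x, y, b, rfl⟩
    erw [SetLike.mem_coe, LinearMap.mem_ker]
    erw [map_sub, LinearMap.mul'_apply, LinearMap.mul'_apply]
    simp [mul_assoc])

/-- `A` is a separable extension of `B`: there is a separability element in `A ⊗_B A`. -/
def IsSepExt (B : Subring A) : Prop :=
  ∃ e : TensorOverSub B, (∀ a : A, lmulB B a e = rmulB B a e) ∧ mulMapB B e = 1

end SepPrelude

/-! The dual-basis identities say exactly that `T = ∑ xᵢ ⊗ yᵢ` commutes with `A`, and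
`μ(T) = ∑ xᵢ yᵢ`, so `u • T` is a separability element. Conversely, for an `A`-central
`e ∈ A ⊗_B A`, the element `r = ψ(e)`, where `ψ(x ⊗ y) = E(x) y`, lies in `A^B` and
`e = ∑ xᵢ ⊗ r yᵢ`. When `A^B = Z(A)`, `r` is central, so `e = r • T`, and `μ(e) = 1`
forces `r = u`. -/

section TensorOverSub

variable {A : Type*} [Ring A] {B : Subring A}

theorem tmulB_mul_coe (x y : A) (b : B) :
    tmulB B (x * (b : A)) y = tmulB B x ((b : A) * y) := by
  rw [tmulB, tmulB, Submodule.Quotient.eq]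
  exact Submodule.subset_span ⟨x, y, b, rfl⟩

theorem tmulB_add_right (x c d : A) : tmulB B x (c + d) = tmulB B x c + tmulB B x d := by
  simp [tmulB, TensorProduct.tmul_add]

theorem tmulB_zero_right (x : A) : tmulB B x 0 = 0 := by
  simp [tmulB]

theorem tmulB_sum_left {ι : Type*} (s : Finset ι) (f : ι → A) (y : A) :
    tmulB B (∑ k ∈ s, f k) y = ∑ k ∈ s, tmulB B (f k) y := by
  simp only [tmulB, ← Submodule.mkQ_apply, TensorProduct.sum_tmul, map_sum]

theorem tmulB_sum_right {ι : Type*} (x : A) (s : Finset ι) (f : ι → A) :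
    tmulB B x (∑ k ∈ s, f k) = ∑ k ∈ s, tmulB B x (f k) := by
  simp only [tmulB, ← Submodule.mkQ_apply, TensorProduct.tmul_sum, map_sum]

theorem lmulB_tmulB (a x y : A) : lmulB B a (tmulB B x y) = tmulB B (a * x) y :=
  rfl

theorem rmulB_tmulB (a x y : A) : rmulB B a (tmulB B x y) = tmulB B x (y * a) :=
  rfl

theorem mulMapB_tmulB (x y : A) : mulMapB B (tmulB B x y) = x * y :=
  rfl

@[elab_as_elim]
theorem TensorOverSub.induction_on {motive : TensorOverSub B → Prop} (z : TensorOverSub B)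
    (zero : motive 0) (tmul : ∀ x y : A, motive (tmulB B x y))
    (add : ∀ z w, motive z → motive w → motive (z + w)) : motive z := by
  obtain ⟨w, rfl⟩ := Submodule.Quotient.mk_surjective _ z
  induction w using TensorProduct.induction_on with
  | zero => exact zero
  | tmul x y => exact tmul x y
  | add v w hv hw => exact add _ _ hv hw

theorem lmulB_lmulB (a a' : A) (z : TensorOverSub B) :
    lmulB B a (lmulB B a' z) = lmulB B (a * a') z := by
  induction z using TensorOverSub.induction_on with
  | zero => simp
  | tmul x y => simp [lmulB_tmulB, mul_assoc]
  | add z w hz hw => simp [hz, hw]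

theorem lmulB_rmulB (a a' : A) (z : TensorOverSub B) :
    lmulB B a (rmulB B a' z) = rmulB B a' (lmulB B a z) := by
  induction z using TensorOverSub.induction_on with
  | zero => simp
  | tmul x y => rfl
  | add z w hz hw => simp [hz, hw]

theorem mulMapB_lmulB (a : A) (z : TensorOverSub B) :
    mulMapB B (lmulB B a z) = a * mulMapB B z := by
  induction z using TensorOverSub.induction_on with
  | zero => simp
  | tmul x y => simp [lmulB_tmulB, mulMapB_tmulB, mul_assoc]
  | add z w hz hw => simp [hz, hw, mul_add]

end TensorOverSub

section Frobenius

variable {A : Type*} [Ring A] {B : Subring A} (E : A →+ B)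

noncomputable def contractLeftB (hEr : ∀ (a : A) (b : B), E (a * (b : A)) = E a * b) :
    TensorOverSub B →ₗ[ℤ] A :=
  Submodule.liftQ _
    (TensorProduct.lift
      ((LinearMap.mul ℤ A).comp (B.subtype.toAddMonoidHom.comp E).toIntLinearMap))
    (by
      refine Submodule.span_le.mpr ?_
      rintro _ ⟨x, y, b, rfl⟩
      refine LinearMap.mem_ker.mpr ?_
      erw [map_sub, TensorProduct.lift.tmul, TensorProduct.lift.tmul]
      change ((E (x * (b : A)) : B) : A) * y - ((E x : B) : A) * ((b : A) * y) = 0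
      rw [hEr, Subring.coe_mul, mul_assoc, sub_self])

variable (hEr : ∀ (a : A) (b : B), E (a * (b : A)) = E a * b)

theorem contractLeftB_tmulB (x y : A) : contractLeftB E hEr (tmulB B x y) = (E x : A) * y :=
  rfl

theorem contractLeftB_rmulB (a : A) (z : TensorOverSub B) :
    contractLeftB E hEr (rmulB B a z) = contractLeftB E hEr z * a := by
  induction z using TensorOverSub.induction_on with
  | zero => simp
  | tmul x y => simp [rmulB_tmulB, contractLeftB_tmulB, mul_assoc]
  | add z w hz hw => simp [hz, hw, add_mul]

theorem contractLeftB_lmulB_coe (hEl : ∀ (b : B) (a : A), E ((b : A) * a) = b * E a)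
    (b : B) (z : TensorOverSub B) :
    contractLeftB E hEr (lmulB B (b : A) z) = b * contractLeftB E hEr z := by
  induction z using TensorOverSub.induction_on with
  | zero => simp
  | tmul x y => simp [lmulB_tmulB, contractLeftB_tmulB, hEl, mul_assoc]
  | add z w hz hw => simp [hz, hw, mul_add]

theorem contractLeftB_mem_centralizer (hEl : ∀ (b : B) (a : A), E ((b : A) * a) = b * E a)
    {z : TensorOverSub B} (hz : ∀ a : A, lmulB B a z = rmulB B a z) :
    contractLeftB E hEr z ∈ Subring.centralizer (B : Set A) := by
  refine Subring.mem_centralizer_iff.mpr fun b hb => ?_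
  lift b to B using hb
  rw [← contractLeftB_lmulB_coe E hEr hEl, hz, contractLeftB_rmulB]

variable {ι : Type*} [Fintype ι] {x y : ι → A}

theorem sum_tmulB_contractLeftB_lmulB (hdual₂ : ∀ a : A, a = ∑ i, x i * (E (y i * a) : A))
    (z : TensorOverSub B) :
    ∑ i, tmulB B (x i) (contractLeftB E hEr (lmulB B (y i) z)) = z := by
  induction z using TensorOverSub.induction_on with
  | zero => simp [tmulB_zero_right]
  | tmul a c =>
    calc ∑ i, tmulB B (x i) (contractLeftB E hEr (lmulB B (y i) (tmulB B a c)))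
        = ∑ i, tmulB B (x i * (E (y i * a) : A)) c := by
          simp only [lmulB_tmulB, contractLeftB_tmulB, tmulB_mul_coe]
      _ = tmulB B a c := by rw [← tmulB_sum_left, ← hdual₂]
  | add z w hz hw => simp only [map_add, tmulB_add_right, Finset.sum_add_distrib, hz, hw]

/-- `r ↦ ∑ xᵢ ⊗ r yᵢ` inverts `ψ : (A ⊗_B A)^A ≅ A^B`. -/
theorem eq_sum_tmulB_contractLeftB_mul (hdual₂ : ∀ a : A, a = ∑ i, x i * (E (y i * a) : A))
    {z : TensorOverSub B} (hz : ∀ a : A, lmulB B a z = rmulB B a z) :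
    z = ∑ i, tmulB B (x i) (contractLeftB E hEr z * y i) := by
  conv_lhs => rw [← sum_tmulB_contractLeftB_lmulB E hEr hdual₂ z]
  simp only [hz, contractLeftB_rmulB]

theorem lmulB_sum_tmulB_eq_rmulB (hdual₁ : ∀ a : A, a = ∑ i, (E (a * x i) : A) * y i)
    (hdual₂ : ∀ a : A, a = ∑ i, x i * (E (y i * a) : A)) (a : A) :
    lmulB B a (∑ i, tmulB B (x i) (y i)) = rmulB B a (∑ i, tmulB B (x i) (y i)) := by
  calc lmulB B a (∑ i, tmulB B (x i) (y i))
      = ∑ i, ∑ j, tmulB B (x j) ((E (y j * (a * x i)) : A) * y i) := by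
        rw [map_sum]
        refine Finset.sum_congr rfl fun i _ => ?_
        conv_lhs => rw [lmulB_tmulB, hdual₂ (a * x i), tmulB_sum_left]
        simp only [tmulB_mul_coe]
    _ = ∑ j, tmulB B (x j) (y j * a) := by
        rw [Finset.sum_comm]
        refine Finset.sum_congr rfl fun j _ => ?_
        rw [← tmulB_sum_right, hdual₁ (y j * a)]
        simp only [mul_assoc]
    _ = rmulB B a (∑ i, tmulB B (x i) (y i)) := by simp only [map_sum, rmulB_tmulB]

theorem eq_lmulB_sum_tmulB_of_mem_center (hdual₁ : ∀ a : A, a = ∑ i, (E (a * x i) : A) * y i)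
    (hdual₂ : ∀ a : A, a = ∑ i, x i * (E (y i * a) : A))
    {z : TensorOverSub B} (hz : ∀ a : A, lmulB B a z = rmulB B a z)
    (hr : contractLeftB E hEr z ∈ Subring.center A) :
    z = lmulB B (contractLeftB E hEr z) (∑ i, tmulB B (x i) (y i)) := by
  rw [lmulB_sum_tmulB_eq_rmulB E hdual₁ hdual₂, map_sum]
  conv_lhs => rw [eq_sum_tmulB_contractLeftB_mul E hEr hdual₂ hz]
  simp only [rmulB_tmulB, Subring.mem_center_iff.mp hr]

end Frobenius

/-- For a Frobenius extension `A ⊇ B` with Frobenius homomorphism `E`,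
dual bases `xᵢ, yᵢ`, and invertible `E`-index `Σᵢ xᵢyᵢ` (with inverse `u ∈ Z(A)`):
if the centralizer `A^B` equals `Z(A)`, then `u · Σᵢ xᵢ ⊗_B yᵢ` is the unique
separability element of `A` over `B`. -/
theorem uniquely_separable_frobenius {A : Type*} [Ring A] (B : Subring A)
    (E : A →+ B)
    (hEl : ∀ (b : B) (a : A), E ((b : A) * a) = b * E a)
    (hEr : ∀ (a : A) (b : B), E (a * (b : A)) = E a * b)
    (n : ℕ) (x y : Fin n → A)
    (hdual₁ : ∀ a : A, a = ∑ i, ((E (a * x i) : A) * y i))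
    (hdual₂ : ∀ a : A, a = ∑ i, (x i * (E (y i * a) : A)))
    (u : A) (hu : u ∈ Subring.center A)
    (huinv₁ : u * (∑ i, x i * y i) = 1) (huinv₂ : (∑ i, x i * y i) * u = 1)
    (hcent : Subring.centralizer (B : Set A) = Subring.center A) :
    (∀ a : A, lmulB B a (lmulB B u (∑ i, tmulB B (x i) (y i))) =
        rmulB B a (lmulB B u (∑ i, tmulB B (x i) (y i)))) ∧
    mulMapB B (lmulB B u (∑ i, tmulB B (x i) (y i))) = 1 ∧
    ∀ e' : TensorOverSub B,
      (∀ a : A, lmulB B a e' = rmulB B a e') → mulMapB B e' = 1 →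
        e' = lmulB B u (∑ i, tmulB B (x i) (y i)) := by
  have hT := lmulB_sum_tmulB_eq_rmulB E hdual₁ hdual₂
  have hμT : mulMapB B (∑ i, tmulB B (x i) (y i)) = ∑ i, x i * y i := by
    simp only [map_sum, mulMapB_tmulB]
  refine ⟨fun a => ?_, by rw [mulMapB_lmulB, hμT, huinv₁], fun e he hμ => ?_⟩
  · rw [lmulB_lmulB, Subring.mem_center_iff.mp hu a, ← lmulB_lmulB, hT, lmulB_rmulB]
  have hr := hcent ▸ contractLeftB_mem_centralizer E hEr hEl he
  have he_eq := eq_lmulB_sum_tmulB_of_mem_center E hEr hdual₁ hdual₂ he hr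
  have hr_inv : contractLeftB E hEr e * ∑ i, x i * y i = 1 := by
    rw [← hμT, ← mulMapB_lmulB, ← he_eq, hμ]
  have hr_eq : contractLeftB E hEr e = u := by
    rw [← mul_one (contractLeftB E hEr e), ← huinv₂, ← mul_assoc, hr_inv, one_mul]
  rwa [hr_eq] at he_eq
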